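/- Let 1 < p < ∞ and let Q₀ ⊂ ℝⁿ be a fixed cube. For every f ∈ L¹(Q₀), ‖f‖_{GaRo_p(Q₀)} ≤ (2p/(p−1)) ‖f‖*_{L(p,∞)}, where ‖f‖*_{L(p,∞)} = sup_{t>0} t^{1/p} f*(t). -/

import Mathlib

open MeasureTheory ENNReal Set

noncomputable section

/-- An axis-parallel cube in `ℝⁿ` with positive side length. -/
structure Cube (n : ℕ) where
  corner : Fin n → ℝ
  side : ℝ
  side_pos : 0 < side

namespace Cube

/-- The cube as a subset of `ℝⁿ`. -/
def toSet {n : ℕ} (Q : Cube n) : Set (Fin n → ℝ) :=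
  Set.univ.pi fun i => Set.Icc (Q.corner i) (Q.corner i + Q.side)

/-- The volume `|Q| = l(Q)ⁿ` of the cube. -/
def vol {n : ℕ} (Q : Cube n) : ℝ := Q.side ^ n

/-- The average `f_Q = (1/|Q|) ∫_Q f`. -/
def avg {n : ℕ} (Q : Cube n) (f : (Fin n → ℝ) → ℝ) : ℝ :=
  (∫ x in Q.toSet, f x) / Q.vol

end Cube

/-- A countable family of subcubes of `Q₀` (indexed by `s ⊆ ℕ`) with pairwise
disjoint interiors: an element of `P(Q₀)`. -/
def IsPackedFamily {n : ℕ} (Q₀ : Cube n) (s : Set ℕ) (Q : ℕ → Cube n) : Prop :=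
  (∀ i ∈ s, (Q i).toSet ⊆ Q₀.toSet) ∧
  s.Pairwise fun i j => Disjoint (interior (Q i).toSet) (interior (Q j).toSet)

/-- `Σ_i (1/|Q_i|) ∫_{Q_i} ∫_{Q_i} |f(x) - f(y)| dx dy`. -/
def garoSum {n : ℕ} (f : (Fin n → ℝ) → ℝ) (s : Set ℕ) (Q : ℕ → Cube n) : ℝ≥0∞ :=
  ∑' i : s, (ENNReal.ofReal (Q (i : ℕ)).vol)⁻¹ *
    ∫⁻ x in (Q (i : ℕ)).toSet, ∫⁻ y in (Q (i : ℕ)).toSet, (‖f x - f y‖₊ : ℝ≥0∞)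

/-- The Garsia–Rodemich norm `‖f‖_{GaRo_p(Q₀)}`: the least constant `C` such that
`Σ_i (1/|Q_i|) ∫∫ |f(x)-f(y)| ≤ C (Σ_i |Q_i|)^{1/p'}` for all families in `P(Q₀)`. -/
def garoNorm {n : ℕ} (p : ℝ) (Q₀ : Cube n) (f : (Fin n → ℝ) → ℝ) : ℝ≥0∞ :=
  sInf {C : ℝ≥0∞ | ∀ s Q, IsPackedFamily Q₀ s Q →
    garoSum f s Q ≤ C * (∑' i : s, ENNReal.ofReal (Q (i : ℕ)).vol) ^ (1 - 1/p)}

/-- The Garsia–Rodemich norm `‖f‖_{GaRo_∞(Q₀)}` (the case `p = ∞`, `1/p' = 1`). -/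
def garoNormInf {n : ℕ} (Q₀ : Cube n) (f : (Fin n → ℝ) → ℝ) : ℝ≥0∞ :=
  sInf {C : ℝ≥0∞ | ∀ s Q, IsPackedFamily Q₀ s Q →
    garoSum f s Q ≤ C * ∑' i : s, ENNReal.ofReal (Q (i : ℕ)).vol}

/-- The John–Nirenberg norm `‖f‖_{JN_p(Q₀)}`. -/
def jnNorm {n : ℕ} (p : ℝ) (Q₀ : Cube n) (f : (Fin n → ℝ) → ℝ) : ℝ≥0∞ :=
  ⨆ (s : Set ℕ) (Q : ℕ → Cube n) (_ : IsPackedFamily Q₀ s Q),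
    (∑' i : s, ENNReal.ofReal (Q (i : ℕ)).vol *
      ((ENNReal.ofReal (Q (i : ℕ)).vol)⁻¹ *
        ∫⁻ x in (Q (i : ℕ)).toSet, (‖f x - (Q (i : ℕ)).avg f‖₊ : ℝ≥0∞)) ^ p) ^ (1/p)

/-- The non-increasing rearrangement `f*(t)` of `f` with respect to `μ`. -/
def rearr {α : Type*} [MeasurableSpace α] (μ : Measure α) (f : α → ℝ) (t : ℝ) : ℝ≥0∞ :=
  sInf {l : ℝ≥0∞ | μ {x | l < (‖f x‖₊ : ℝ≥0∞)} ≤ ENNReal.ofReal t}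

/-- The maximal function of the rearrangement, `f**(t) = (1/t) ∫₀ᵗ f*(s) ds`. -/
def rearr2 {α : Type*} [MeasurableSpace α] (μ : Measure α) (f : α → ℝ) (t : ℝ) : ℝ≥0∞ :=
  (ENNReal.ofReal t)⁻¹ * ∫⁻ s in Set.Ioc (0 : ℝ) t, rearr μ f s

/-- The Marcinkiewicz weak-`L^p` quasinorm `‖f‖*_{L(p,∞)} = sup_{t>0} t^{1/p} f*(t)`. -/
def weakNorm {α : Type*} [MeasurableSpace α] (μ : Measure α) (p : ℝ) (f : α → ℝ) : ℝ≥0∞ :=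
  ⨆ t ∈ Set.Ioi (0 : ℝ), ENNReal.ofReal t ^ (1/p) * rearr μ f t

/-- The `BMO` seminorm `sup_{Q ⊆ Q₀} (1/|Q|) ∫_Q |f - f_Q|`. -/
def bmoSup {n : ℕ} (Q₀ : Cube n) (f : (Fin n → ℝ) → ℝ) : ℝ≥0∞ :=
  ⨆ (Q : Cube n) (_ : Q.toSet ⊆ Q₀.toSet),
    (ENNReal.ofReal Q.vol)⁻¹ * ∫⁻ x in Q.toSet, (‖f x - Q.avg f‖₊ : ℝ≥0∞)

/-- `‖f‖_* = sup_{Q ⊆ Q₀} (1/|Q|²) ∫_Q ∫_Q |f(x) - f(y)| dx dy`. -/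
def starSup {n : ℕ} (Q₀ : Cube n) (f : (Fin n → ℝ) → ℝ) : ℝ≥0∞ :=
  ⨆ (Q : Cube n) (_ : Q.toSet ⊆ Q₀.toSet),
    ((ENNReal.ofReal Q.vol) ^ 2)⁻¹ *
      ∫⁻ x in Q.toSet, ∫⁻ y in Q.toSet, (‖f x - f y‖₊ : ℝ≥0∞)

/-- `g` is an upper gradient of `f` on `Q₀` with constant `c`, in the `S_p` sense:
`(1/|Q|) ∫_Q |f - f_Q| ≤ c l(Q) ((1/|Q|) ∫_Q |g|^p)^{1/p}` for every subcube `Q ⊆ Q₀`. -/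
def UpperGradient {n : ℕ} (Q₀ : Cube n) (p : ℝ) (f g : (Fin n → ℝ) → ℝ) (c : ℝ) : Prop :=
  ∀ Q : Cube n, Q.toSet ⊆ Q₀.toSet →
    (ENNReal.ofReal Q.vol)⁻¹ * ∫⁻ x in Q.toSet, (‖f x - Q.avg f‖₊ : ℝ≥0∞) ≤
      ENNReal.ofReal (c * Q.side) *
        ((ENNReal.ofReal Q.vol)⁻¹ * ∫⁻ x in Q.toSet, (‖g x‖₊ : ℝ≥0∞) ^ p) ^ (1/p)


lemma cube_meas {n : ℕ} (Q : Cube n) : MeasurableSet Q.toSet :=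
  (isClosed_set_pi fun i _ => isClosed_Icc).measurableSet

lemma cube_vol_pos {n : ℕ} (Q : Cube n) : 0 < Q.vol := pow_pos Q.side_pos n

lemma cube_volume {n : ℕ} (Q : Cube n) : volume Q.toSet = ENNReal.ofReal Q.vol := by
  rw [Cube.toSet, volume_pi_pi]
  simp [Real.volume_Icc, Cube.vol, ← ENNReal.ofReal_pow Q.side_pos.le]

lemma cube_volume_interior {n : ℕ} (Q : Cube n) :
    volume (interior Q.toSet) = ENNReal.ofReal Q.vol := by
  rw [Cube.toSet, interior_pi_set finite_univ]
  simp only [interior_Icc]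
  rw [volume_pi_pi]
  simp [Real.volume_Ioo, Cube.vol, ← ENNReal.ofReal_pow Q.side_pos.le]

lemma cube_frontier_null {n : ℕ} (Q : Cube n) :
    volume (Q.toSet \ interior Q.toSet) = 0 := by
  rw [measure_diff interior_subset measurableSet_interior.nullMeasurableSet
    (by rw [cube_volume_interior]; exact ofReal_ne_top),
    cube_volume, cube_volume_interior, tsub_self]

lemma cube_aedisjoint {n : ℕ} {Q R : Cube n}
    (h : Disjoint (interior Q.toSet) (interior R.toSet)) :
    MeasureTheory.AEDisjoint volume Q.toSet R.toSet := by
  refine measure_mono_null (fun x hx => ?_) (measure_union_null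
    (cube_frontier_null Q) (cube_frontier_null R))
  rcases hx with ⟨hxQ, hxR⟩
  by_cases hQ : x ∈ interior Q.toSet
  · exact Or.inr ⟨hxR, fun hR => h.ne_of_mem hQ hR rfl⟩
  · exact Or.inl ⟨hxQ, hQ⟩

lemma double_bound' {α : Type*} [MeasurableSpace α] {μ : Measure α} {A : Set α}
    {V : ℝ≥0∞} (hV : μ A = V) (hV0 : V ≠ 0) (hVtop : V ≠ ∞) (f : α → ℝ) :
    V⁻¹ * ∫⁻ x in A, ∫⁻ y in A, (‖f x - f y‖₊ : ℝ≥0∞) ∂μ ∂μ ≤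
      2 * ∫⁻ x in A, (‖f x‖₊ : ℝ≥0∞) ∂μ := by
  set I := ∫⁻ x in A, (‖f x‖₊ : ℝ≥0∞) ∂μ with hI
  have step1 : ∀ x, (∫⁻ y in A, (‖f x - f y‖₊ : ℝ≥0∞) ∂μ) ≤ (‖f x‖₊ : ℝ≥0∞) * V + I := by
    intro x
    calc ∫⁻ y in A, (‖f x - f y‖₊ : ℝ≥0∞) ∂μ
        ≤ ∫⁻ y in A, ((‖f x‖₊ : ℝ≥0∞) + (‖f y‖₊ : ℝ≥0∞)) ∂μ := by
          refine lintegral_mono fun y => ?_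
          simpa using ENNReal.coe_le_coe.mpr (nnnorm_sub_le (f x) (f y))
      _ = (‖f x‖₊ : ℝ≥0∞) * V + I := by
          rw [lintegral_add_left measurable_const, setLIntegral_const, hV]
  have step2 : (∫⁻ x in A, ∫⁻ y in A, (‖f x - f y‖₊ : ℝ≥0∞) ∂μ ∂μ) ≤ 2 * (V * I) := by
    calc ∫⁻ x in A, ∫⁻ y in A, (‖f x - f y‖₊ : ℝ≥0∞) ∂μ ∂μ
        ≤ ∫⁻ x in A, ((‖f x‖₊ : ℝ≥0∞) * V + I) ∂μ := lintegral_mono step1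
      _ = (∫⁻ x in A, (‖f x‖₊ : ℝ≥0∞) * V ∂μ) + I * V := by
          rw [lintegral_add_right _ measurable_const, setLIntegral_const, hV]
      _ = I * V + I * V := by rw [lintegral_mul_const' V _ hVtop]
      _ = 2 * (V * I) := by ring
  calc V⁻¹ * ∫⁻ x in A, ∫⁻ y in A, (‖f x - f y‖₊ : ℝ≥0∞) ∂μ ∂μ
      ≤ V⁻¹ * (2 * (V * I)) := by gcongr
    _ = 2 * ((V⁻¹ * V) * I) := by ring
    _ = 2 * I := by rw [ENNReal.inv_mul_cancel hV0 hVtop, one_mul]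

lemma dist_bound {α : Type*} [MeasurableSpace α] (μ : Measure α) {p : ℝ} (hp : 1 < p)
    (f : α → ℝ) {W : ℝ≥0∞} (hW : weakNorm μ p f ≤ W) (hWtop : W ≠ ∞) {t : ℝ} (ht : 0 < t) :
    μ {x | t < |f x|} ≤ (W / ENNReal.ofReal t) ^ p := by
  have hp0 : (0:ℝ) < p := lt_trans one_pos hp
  set τ := ENNReal.ofReal t with hτ
  have hτ0 : τ ≠ 0 := by simp [hτ, ht]
  have hτtop : τ ≠ ∞ := ofReal_ne_top
  have hbtop : (W / τ) ^ p ≠ ∞ :=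
    ENNReal.rpow_ne_top_of_nonneg hp0.le ((ENNReal.div_lt_top hWtop hτ0).ne)
  refine le_of_forall_gt_imp_ge_of_dense fun c hc => ?_
  obtain ⟨u, hu0, h1, h2⟩ := ENNReal.lt_iff_exists_real_btwn.mp hc
  have hupos : 0 < u := by
    by_contra h
    push_neg at h
    rw [ENNReal.ofReal_eq_zero.mpr h] at h1
    exact (not_lt_of_ge zero_le) h1
  -- weak norm bound at u
  have hwu : ENNReal.ofReal u ^ (1/p) * rearr μ f u ≤ W := by
    rw [weakNorm] at hW
    exact le_trans (le_iSup₂ (f := fun (v : ℝ) (_ : v ∈ Set.Ioi (0:ℝ)) =>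
      ENNReal.ofReal v ^ (1/p) * rearr μ f v) u hupos) hW
  set U := ENNReal.ofReal u ^ (1/p) with hU
  have hU0 : U ≠ 0 := by
    simp [hU, ENNReal.rpow_eq_zero_iff, ENNReal.ofReal_eq_zero, hupos, not_le.mpr hupos]
  have hUtop : U ≠ ∞ := by
    simp [hU, ENNReal.rpow_eq_top_iff, ENNReal.ofReal_eq_zero, not_le.mpr hupos]
  -- W / τ < U
  have h1' : W / τ < U := by
    have := ENNReal.rpow_lt_rpow h1 (by positivity : (0:ℝ) < 1/p)
    rwa [← ENNReal.rpow_mul, mul_one_div_cancel hp0.ne', ENNReal.rpow_one] at this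
  -- rearr μ f u < τ
  have hrlt : rearr μ f u < τ := by
    have hr : rearr μ f u ≤ W / U := by
      rw [ENNReal.le_div_iff_mul_le (Or.inl hU0) (Or.inl hUtop), mul_comm]
      exact hwu
    refine lt_of_le_of_lt hr ?_
    rw [ENNReal.div_lt_iff (Or.inl hU0) (Or.inl hUtop)]
    rw [ENNReal.div_lt_iff (Or.inl hτ0) (Or.inl hτtop)] at h1'
    rwa [mul_comm] at h1'
  -- conclude
  obtain ⟨l, hl, hlτ⟩ := sInf_lt_iff.mp hrlt
  refine le_trans (le_trans (measure_mono fun x hx => ?_) hl) h2.le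
  simp only [Set.mem_setOf_eq] at hx ⊢
  calc l < τ := hlτ
    _ ≤ (‖f x‖₊ : ℝ≥0∞) := by
        rw [← enorm_eq_nnnorm, Real.enorm_eq_ofReal_abs]
        exact (ENNReal.ofReal_lt_ofReal_iff (lt_trans ht hx)).mpr hx |>.le

lemma real_identity {p w T' : ℝ} (hp : 1 < p) (hw : 0 < w) (hT : 0 < T') :
    T' * (w * T' ^ (-1/p)) + w ^ p * (w * T' ^ (-1/p)) ^ (1-p) / (p-1)
      = p / (p-1) * w * T' ^ (1 - 1/p) := by
  have hp0 : (0:ℝ) < p := by linarith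
  have hp1 : p - 1 ≠ 0 := by linarith
  have h1 : T' * (w * T' ^ (-1/p)) = w * T' ^ (1 - 1/p) := by
    rw [show T' * (w * T' ^ (-1/p)) = w * (T' ^ (1:ℝ) * T' ^ (-1/p)) by
      rw [Real.rpow_one]; ring, ← Real.rpow_add hT,
      show (1:ℝ) + -1/p = 1 - 1/p by ring]
  have h2 : w ^ p * (w * T' ^ (-1/p)) ^ (1-p) = w * T' ^ (1 - 1/p) := by
    rw [Real.mul_rpow hw.le (Real.rpow_nonneg hT.le _),
      ← Real.rpow_mul hT.le, ← mul_assoc, ← Real.rpow_add hw,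
      show p + (1 - p) = (1:ℝ) by ring, Real.rpow_one,
      show -1/p * (1-p) = 1 - 1/p by field_simp; ring]
  rw [h1, h2]
  field_simp
  ring

lemma calc_bound {p : ℝ} (hp : 1 < p) (W T : ℝ≥0∞) (hWtop : W ≠ ∞) :
    (∫⁻ t in Ioi (0:ℝ), min T ((W / ENNReal.ofReal t) ^ p)) ≤
      ENNReal.ofReal (p / (p-1)) * W * T ^ (1 - 1/p) := by
  have hp0 : (0:ℝ) < p := by linarith
  have hep : (0:ℝ) < 1 - 1/p := by
    rw [sub_pos, div_lt_one hp0]; exact hp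
  by_cases hW0 : W = 0
  · have : ∀ t ∈ Ioi (0:ℝ), min T ((W / ENNReal.ofReal t) ^ p) = 0 := by
      intro t ht
      simp [hW0, ENNReal.zero_div, ENNReal.zero_rpow_of_pos hp0]
    rw [setLIntegral_congr_fun measurableSet_Ioi this]
    simp
  by_cases hT0 : T = 0
  · simp [hT0]
  by_cases hTtop : T = ∞
  · rw [hTtop, ENNReal.top_rpow_of_pos hep, ENNReal.mul_top]
    · exact le_top
    · exact mul_ne_zero (by rw [Ne, ENNReal.ofReal_eq_zero, not_le]; exact div_pos hp0 (by linarith)) hW0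
  -- main case
  set w := W.toReal with hw
  set T' := T.toReal with hT'
  have hw0 : 0 < w := ENNReal.toReal_pos hW0 hWtop
  have hT'0 : 0 < T' := ENNReal.toReal_pos hT0 hTtop
  set t₀ := w * T' ^ (-1/p) with ht₀def
  have ht₀ : 0 < t₀ := by positivity
  have hsplit : Ioi (0:ℝ) = Ioc 0 t₀ ∪ Ioi t₀ := (Ioc_union_Ioi_eq_Ioi ht₀.le).symm
  have hI1 : (∫⁻ t in Ioc (0:ℝ) t₀, min T ((W / ENNReal.ofReal t) ^ p)) ≤
      ENNReal.ofReal (T' * t₀) := by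
    calc (∫⁻ t in Ioc (0:ℝ) t₀, min T ((W / ENNReal.ofReal t) ^ p))
        ≤ ∫⁻ _ in Ioc (0:ℝ) t₀, T := lintegral_mono fun t => min_le_left _ _
      _ = T * ENNReal.ofReal t₀ := by rw [setLIntegral_const, Real.volume_Ioc]; norm_num
      _ = ENNReal.ofReal (T' * t₀) := by
          rw [ENNReal.ofReal_mul hT'0.le, ENNReal.ofReal_toReal hTtop]
  have hI2 : (∫⁻ t in Ioi t₀, min T ((W / ENNReal.ofReal t) ^ p)) ≤
      ENNReal.ofReal (w ^ p * t₀ ^ (1-p) / (p-1)) := by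
    have hptw : ∀ t ∈ Ioi t₀, min T ((W / ENNReal.ofReal t) ^ p)
        ≤ W ^ p * ENNReal.ofReal (t ^ (-p)) := by
      intro t ht
      have htpos : 0 < t := lt_trans ht₀ ht
      refine le_trans (min_le_right _ _) (le_of_eq ?_)
      rw [ENNReal.div_rpow_of_nonneg _ _ hp0.le, div_eq_mul_inv _ (ENNReal.ofReal t ^ p),
        ← ENNReal.rpow_neg, ENNReal.ofReal_rpow_of_pos htpos]
    calc (∫⁻ t in Ioi t₀, min T ((W / ENNReal.ofReal t) ^ p))
        ≤ ∫⁻ t in Ioi t₀, W ^ p * ENNReal.ofReal (t ^ (-p)) := by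
          refine setLIntegral_mono ?_ hptw
          exact ((measurable_id.pow measurable_const).ennreal_ofReal).const_mul _
      _ = W ^ p * ∫⁻ t in Ioi t₀, ENNReal.ofReal (t ^ (-p)) :=
          lintegral_const_mul' _ _ (ENNReal.rpow_ne_top_of_nonneg hp0.le hWtop)
      _ = W ^ p * ENNReal.ofReal (∫ t in Ioi t₀, t ^ (-p)) := by
          rw [← ofReal_integral_eq_lintegral_ofReal
            (integrableOn_Ioi_rpow_of_lt (by linarith) ht₀)
            ((ae_restrict_iff' measurableSet_Ioi).mpr (Filter.Eventually.of_forall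
              fun t ht => Real.rpow_nonneg (le_of_lt (lt_trans ht₀ ht)) _))]
      _ = ENNReal.ofReal (w ^ p * t₀ ^ (1-p) / (p-1)) := by
          rw [integral_Ioi_rpow_of_lt (by linarith) ht₀,
            show W = ENNReal.ofReal w from (ENNReal.ofReal_toReal hWtop).symm,
            ENNReal.ofReal_rpow_of_pos hw0,
            ← ENNReal.ofReal_mul (Real.rpow_nonneg hw0.le _)]
          congr 1
          rw [show -t₀ ^ (-p + 1) / (-p + 1) = t₀ ^ (1 - p) / (p - 1) by
            rw [show (-p + 1 : ℝ) = 1 - p by ring,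
              div_eq_div_iff (by linarith) (by linarith : (0:ℝ) < p - 1).ne']
            ring]
          ring
  calc (∫⁻ t in Ioi (0:ℝ), min T ((W / ENNReal.ofReal t) ^ p))
      ≤ (∫⁻ t in Ioc (0:ℝ) t₀, min T ((W / ENNReal.ofReal t) ^ p)) +
        (∫⁻ t in Ioi t₀, min T ((W / ENNReal.ofReal t) ^ p)) := by
        rw [hsplit]; exact lintegral_union_le _ _ _
    _ ≤ ENNReal.ofReal (T' * t₀) + ENNReal.ofReal (w ^ p * t₀ ^ (1-p) / (p-1)) :=
        add_le_add hI1 hI2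
    _ = ENNReal.ofReal (T' * t₀ + w ^ p * t₀ ^ (1-p) / (p-1)) := by
        rw [← ENNReal.ofReal_add (mul_nonneg hT'0.le ht₀.le)
          (div_nonneg (mul_nonneg (Real.rpow_nonneg hw0.le _)
            (Real.rpow_nonneg ht₀.le _)) (by linarith))]
    _ = ENNReal.ofReal (p / (p-1) * w * T' ^ (1 - 1/p)) := by
        rw [real_identity hp hw0 hT'0]
    _ = ENNReal.ofReal (p / (p-1)) * W * T ^ (1 - 1/p) := by
        rw [ENNReal.ofReal_mul (mul_nonneg (div_nonneg hp0.le (by linarith)) hw0.le),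
          ENNReal.ofReal_mul (div_nonneg hp0.le (by linarith)),
          ENNReal.ofReal_toReal hWtop, ← ENNReal.ofReal_rpow_of_pos hT'0,
          ENNReal.ofReal_toReal hTtop]

/-- For `1 < p < ∞`, a cube `Q₀ ⊆ ℝⁿ` and `f ∈ L¹(Q₀)`,
`‖f‖_{GaRo_p(Q₀)} ≤ (2p/(p-1)) ‖f‖*_{L(p,∞)}`. -/
theorem garo_le_weak {n : ℕ} (p : ℝ) (hp : 1 < p) (Q₀ : Cube n)
    (f : (Fin n → ℝ) → ℝ) (hf : IntegrableOn f Q₀.toSet) :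
    garoNorm p Q₀ f ≤
      ENNReal.ofReal (2 * p / (p - 1)) * weakNorm (volume.restrict Q₀.toSet) p f := by
  set ν := volume.restrict Q₀.toSet with hν
  set W := weakNorm ν p f with hWdef
  by_cases hWtop : W = ∞
  · rw [hWtop, ENNReal.mul_top (by
      rw [Ne, ENNReal.ofReal_eq_zero, not_le]
      exact div_pos (by linarith) (by linarith))]
    exact le_top
  refine sInf_le ?_
  intro s Q hPQ
  set T := ∑' i : s, ENNReal.ofReal (Q (i : ℕ)).vol with hT
  have hcube : ∀ i : s, (ENNReal.ofReal (Q (i:ℕ)).vol)⁻¹ *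
      ∫⁻ x in (Q (i:ℕ)).toSet, ∫⁻ y in (Q (i:ℕ)).toSet, (‖f x - f y‖₊ : ℝ≥0∞) ≤
      2 * ∫⁻ x in (Q (i:ℕ)).toSet, (‖f x‖₊ : ℝ≥0∞) := fun i =>
    double_bound' (cube_volume _) (ENNReal.ofReal_pos.mpr (cube_vol_pos _)).ne'
      ofReal_ne_top f
  set U := ⋃ i : s, (Q (i:ℕ)).toSet with hU
  have hdisj : Pairwise (Function.onFun (MeasureTheory.AEDisjoint volume) fun i : s => (Q (i:ℕ)).toSet) := by
    intro i j hij
    exact cube_aedisjoint (hPQ.2 i.2 j.2 fun h => hij (Subtype.ext h))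
  have hsum : (∑' i : s, ∫⁻ x in (Q (i:ℕ)).toSet, (‖f x‖₊ : ℝ≥0∞)) =
      ∫⁻ x in U, (‖f x‖₊ : ℝ≥0∞) :=
    (lintegral_iUnion₀ (fun i => (cube_meas _).nullMeasurableSet) hdisj _).symm
  have hUsub : U ⊆ Q₀.toSet := iUnion_subset fun i => hPQ.1 i i.2
  have hle : volume.restrict U ≤ ν := by
    rw [hν]; exact Measure.restrict_mono hUsub le_rfl
  have hmU : volume U ≤ T := by
    refine le_trans (measure_iUnion_le _) (le_of_eq (tsum_congr fun i => cube_volume _))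
  have hfm : AEMeasurable f (volume.restrict U) :=
    hf.aestronglyMeasurable.aemeasurable.mono_measure hle
  have habs : AEMeasurable (fun x => |f x|) (volume.restrict U) :=
    continuous_abs.measurable.comp_aemeasurable hfm
  have hlayer : (∫⁻ x in U, (‖f x‖₊ : ℝ≥0∞)) =
      ∫⁻ t in Ioi (0:ℝ), volume.restrict U {a | t < |f a|} := by
    rw [← lintegral_eq_lintegral_meas_lt (volume.restrict U)
      (Filter.Eventually.of_forall fun x => abs_nonneg (f x)) habs]
    exact lintegral_congr fun x => Real.enorm_eq_ofReal_abs (f x)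
  have hpt : ∀ t ∈ Ioi (0:ℝ), volume.restrict U {a | t < |f a|} ≤
      min T ((W / ENNReal.ofReal t) ^ p) := by
    intro t ht
    refine le_min ?_ ?_
    · calc volume.restrict U {a | t < |f a|}
          ≤ volume.restrict U univ := measure_mono (subset_univ _)
        _ = volume U := by simp
        _ ≤ T := hmU
    · exact le_trans (Measure.le_iff'.mp hle _) (dist_bound ν hp f le_rfl hWtop ht)
  have hmain : (∫⁻ x in U, (‖f x‖₊ : ℝ≥0∞)) ≤
      ENNReal.ofReal (p/(p-1)) * W * T ^ (1 - 1/p) := by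
    rw [hlayer]
    refine le_trans (setLIntegral_mono ?_ hpt) (calc_bound hp W T hWtop)
    exact measurable_const.min ((measurable_const.div ENNReal.measurable_ofReal).pow
      measurable_const)
  calc garoSum f s Q
      ≤ ∑' i : s, 2 * ∫⁻ x in (Q (i:ℕ)).toSet, (‖f x‖₊ : ℝ≥0∞) :=
        ENNReal.tsum_le_tsum hcube
    _ = 2 * ∑' i : s, ∫⁻ x in (Q (i:ℕ)).toSet, (‖f x‖₊ : ℝ≥0∞) := ENNReal.tsum_mul_left
    _ = 2 * ∫⁻ x in U, (‖f x‖₊ : ℝ≥0∞) := by rw [hsum]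
    _ ≤ 2 * (ENNReal.ofReal (p/(p-1)) * W * T ^ (1 - 1/p)) := by gcongr
    _ = ENNReal.ofReal (2*p/(p-1)) * W * T ^ (1 - 1/p) := by
        rw [show (2:ℝ)*p/(p-1) = 2*(p/(p-1)) by ring,
          ENNReal.ofReal_mul (by norm_num), ENNReal.ofReal_ofNat]
        ring


end
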